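/- Let A = (Q, q0, δ, F) be a deterministic Büchi automaton over a finite nonempty alphabet Σ. Then L_{q0}(A) is a fairness specification (i.e., both stable and absolute liveness) if, and only if, L_{q0}(A) is nonempty and every reachable state s of A is language-equivalent to the initial state, i.e., L_s(A) = L_{q0}(A). -/
import Mathlib


/-- The ω-word obtained by prepending the finite word `u` to the ω-word `w`. -/
def prepend {A : Type*} (u : List A) (w : ℕ → A) : ℕ → A :=
  fun i => if h : i < u.length then u.get ⟨i, h⟩ else w (i - u.length)

/-- A specification `L` is an absolute liveness specification if it is nonempty and
closed under prepending arbitrary finite prefixes. -/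
def AbsoluteLiveness {A : Type*} (L : Set (ℕ → A)) : Prop :=
  L.Nonempty ∧ ∀ (u : List A) (w : ℕ → A), w ∈ L → prepend u w ∈ L

/-- A specification `L` is a stable specification if it is closed under suffixes. -/
def Stable {A : Type*} (L : Set (ℕ → A)) : Prop :=
  ∀ w ∈ L, ∀ n : ℕ, (fun i => w (n + i)) ∈ L

/-- A fairness specification is both stable and an absolute liveness specification. -/
def Fairness {A : Type*} (L : Set (ℕ → A)) : Prop :=
  Stable L ∧ AbsoluteLiveness L

/-- The run of a deterministic automaton with transition function `δ`
from state `q` on the ω-word `w`. -/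
def dRun {Q A : Type*} (δ : Q → A → Q) (q : Q) (w : ℕ → A) : ℕ → Q
  | 0 => q
  | n + 1 => δ (dRun δ q w n) (w n)

/-- The language of the deterministic Büchi automaton `(δ, F)` from state `q`. -/
def dLang {Q A : Type*} (δ : Q → A → Q) (F : Set (Q × A)) (q : Q) : Set (ℕ → A) :=
  {w | ∃ᶠ i in Filter.atTop, (dRun δ q w i, w i) ∈ F}

/-- A state `s` is reachable from `q0` if some finite word drives the automaton
from `q0` to `s`. -/
def dReachable {Q A : Type*} (δ : Q → A → Q) (q0 s : Q) : Prop :=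
  ∃ u : List A, u.foldl δ q0 = s

lemma dRun_add {Q A : Type*} (δ : Q → A → Q) (q : Q) (w : ℕ → A) (m n : ℕ) :
    dRun δ q w (m + n) = dRun δ (dRun δ q w m) (fun i => w (m + i)) n := by
  induction n with
  | zero => rfl
  | succ n ih => show δ (dRun δ q w (m + n)) (w (m + n)) = _; rw [ih]; rfl

lemma dRun_shift {Q A : Type*} (δ : Q → A → Q) (q : Q) (w : ℕ → A) (n : ℕ) :
    dRun δ q w (n + 1) = dRun δ (δ q (w 0)) (fun i => w (i + 1)) n := by
  induction n with
  | zero => rfl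
  | succ n ih => show δ (dRun δ q w (n+1)) (w (n+1)) = _; rw [ih]; rfl

lemma prepend_cons_shift {A : Type*} (a : A) (t : List A) (w : ℕ → A) :
    (fun i => prepend (a :: t) w (i + 1)) = prepend t w := by
  funext i
  simp only [prepend, List.length_cons]
  by_cases h : i < t.length
  · rw [dif_pos (by omega), dif_pos h]; rfl
  · rw [dif_neg (by omega), dif_neg h]
    congr 1; omega

lemma dRun_prepend {Q A : Type*} (δ : Q → A → Q) (q : Q) (u : List A) (w : ℕ → A) :
    dRun δ q (prepend u w) u.length = u.foldl δ q := by
  induction u generalizing q with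
  | nil => rfl
  | cons a t ih =>
    show dRun δ q (prepend (a :: t) w) (t.length + 1) = _
    rw [dRun_shift, prepend_cons_shift]
    have h0 : prepend (a :: t) w 0 = a := by simp [prepend]
    rw [h0, List.foldl_cons, ih]

lemma freq_shift {P : ℕ → Prop} (n : ℕ) :
    (∃ᶠ i in Filter.atTop, P (n + i)) ↔ ∃ᶠ i in Filter.atTop, P i := by
  rw [Filter.frequently_atTop, Filter.frequently_atTop]
  constructor
  · intro h a
    obtain ⟨b, hb, hP⟩ := h a
    exact ⟨n + b, by omega, hP⟩
  · intro h a
    obtain ⟨b, hb, hP⟩ := h (n + a)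
    exact ⟨b - n, by omega, by rwa [show n + (b - n) = b by omega]⟩

lemma mem_dLang_suffix {Q A : Type*} (δ : Q → A → Q) (F : Set (Q × A)) (q : Q)
    (w : ℕ → A) (n : ℕ) :
    (fun i => w (n + i)) ∈ dLang δ F (dRun δ q w n) ↔ w ∈ dLang δ F q := by
  show (∃ᶠ i in Filter.atTop, _) ↔ (∃ᶠ i in Filter.atTop, _)
  have : ∀ i, (dRun δ (dRun δ q w n) (fun i => w (n + i)) i, w (n + i))
      = (dRun δ q w (n + i), w (n + i)) := by
    intro i; rw [dRun_add]
  simp only [this]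
  exact freq_shift (P := fun i => (dRun δ q w i, w i) ∈ F) n

lemma mem_dLang_prepend {Q A : Type*} (δ : Q → A → Q) (F : Set (Q × A)) (q : Q)
    (u : List A) (w : ℕ → A) :
    prepend u w ∈ dLang δ F q ↔ w ∈ dLang δ F (u.foldl δ q) := by
  have h1 : (fun i => prepend u w (u.length + i)) = w := by
    funext i
    simp only [prepend]
    rw [dif_neg (by omega)]
    congr 1; omega
  have := mem_dLang_suffix δ F q (prepend u w) u.length
  rw [h1, dRun_prepend] at this
  exact this.symm

lemma foldl_range_map {Q A : Type*} (δ : Q → A → Q) (q : Q) (w : ℕ → A) (n : ℕ) :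
    ((List.range n).map w).foldl δ q = dRun δ q w n := by
  induction n with
  | zero => rfl
  | succ n ih => rw [List.range_succ, List.map_append, List.foldl_append, ih]; rfl

theorem fairness_iff_all_states_language_equivalent
    {A Q : Type*} [Fintype A] [Nonempty A] [Fintype Q]
    (δ : Q → A → Q) (q0 : Q) (F : Set (Q × A)) :
    Fairness (dLang δ F q0) ↔
      ((dLang δ F q0).Nonempty ∧
        ∀ s : Q, dReachable δ q0 s → dLang δ F s = dLang δ F q0) := by
  constructor
  · rintro ⟨hstab, hne, hpre⟩
    refine ⟨hne, ?_⟩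
    rintro s ⟨u, hu⟩
    ext w
    constructor
    · intro hw
      have h1 : prepend u w ∈ dLang δ F q0 := by
        rw [mem_dLang_prepend, hu]; exact hw
      have h2 := hstab _ h1 u.length
      have h3 : (fun i => prepend u w (u.length + i)) = w := by
        funext i
        simp only [prepend]
        rw [dif_neg (by omega)]
        congr 1; omega
      rwa [h3] at h2
    · intro hw
      have h1 := hpre u w hw
      rw [mem_dLang_prepend, hu] at h1
      exact h1
  · rintro ⟨hne, heq⟩
    refine ⟨?_, hne, ?_⟩
    · intro w hw n
      have h1 := (mem_dLang_suffix δ F q0 w n).mpr hw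
      have hr : dReachable δ q0 (dRun δ q0 w n) :=
        ⟨(List.range n).map w, foldl_range_map δ q0 w n⟩
      rwa [heq _ hr] at h1
    · intro u w hw
      rw [mem_dLang_prepend, heq _ ⟨u, rfl⟩]
      exact hw
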